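/- For every n ≥ 1 and every voter matrix V : Fin n → Fin 3 → Bool (three topics) in which every column has majority Y, there exists a proposal p supported by a majority of voters such that 6·(number of matches of p) ≥ 5·(number of matches of the all-Y proposal). That is, the lower-bound direction of r_3 = 5/6: r_V ≥ 5/6 for every voter matrix with three topics. -/
import Mathlib


open Finset

/-- Number of topics on which opinion vector `v` agrees with proposal `p`. -/
def agreeCount {t : ℕ} (v p : Fin t → Bool) : ℕ :=
  (univ.filter (fun j => v j = p j)).card

/-- Voter `v` supports proposal `p`: agreement on at least half the topics,
    i.e. `2 * |{j : v j = p j}| ≥ t`. -/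
def Supports {t : ℕ} (v p : Fin t → Bool) : Prop :=
  t ≤ 2 * agreeCount v p

instance {t : ℕ} (v p : Fin t → Bool) : Decidable (Supports v p) :=
  Nat.decLe _ _

/-- Proposal `p` is supported by a majority of the voters of `V`:
    `2 * |{i : voter i supports p}| ≥ n`. -/
def MajSupported {n t : ℕ} (V : Fin n → Fin t → Bool) (p : Fin t → Bool) : Prop :=
  n ≤ 2 * (univ.filter (fun i => Supports (V i) p)).card

/-- Column `j` of `V` has majority Y: `2 * |{i : V i j = true}| ≥ n`. -/
def ColMajority {n t : ℕ} (V : Fin n → Fin t → Bool) (j : Fin t) : Prop :=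
  n ≤ 2 * (univ.filter (fun i => V i j = true)).card

/-- Number of true entries of a vector. -/
def trueCount {t : ℕ} (p : Fin t → Bool) : ℕ :=
  (univ.filter (fun j => p j = true)).card

/-- Number of matching opinions between the voters of `V` and proposal `p`. -/
def matchCount {n t : ℕ} (V : Fin n → Fin t → Bool) (p : Fin t → Bool) : ℕ :=
  (univ.filter (fun ij : Fin n × Fin t => V ij.1 ij.2 = p ij.2)).card

/- Auxiliary lemmas -/

lemma agree3 (v p : Fin 3 → Bool) :
    agreeCount v p = (if v 0 = p 0 then 1 else 0) + (if v 1 = p 1 then 1 else 0)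
      + (if v 2 = p 2 then 1 else 0) := by
  rw [agreeCount, Finset.card_filter, Fin.sum_univ_three]

lemma lemA (v : Fin 3 → Bool) (j0 : Fin 3) :
    agreeCount v (fun j => decide (j ≠ j0)) + 2 * (if v j0 = true then 1 else 0)
      = agreeCount v (fun _ => true) + 1 := by
  fin_cases j0 <;> rcases h0 : v 0 <;> rcases h1 : v 1 <;> rcases h2 : v 2 <;>
    simp [agree3, h0, h1, h2]

lemma lemB (v : Fin 3 → Bool) (j0 : Fin 3) :
    (if Supports v (fun j => decide (j ≠ j0)) then (1:ℕ) else 0)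
      + (if agreeCount v (fun _ => true) = 0 then 1 else 0)
      + (if v j0 = true then 1 else 0)
      = 1 + (if agreeCount v (fun _ => true) = 3 then 1 else 0) := by
  fin_cases j0 <;> rcases h0 : v 0 <;> rcases h1 : v 1 <;> rcases h2 : v 2 <;>
    simp [Supports, agree3, h0, h1, h2]

lemma lemI2 (v : Fin 3 → Bool) :
    agreeCount v (fun _ => true) + (if agreeCount v (fun _ => true) = 0 then 1 else 0)
      = 1 + (if Supports v (fun _ => true) then 1 else 0)
      + (if agreeCount v (fun _ => true) = 3 then 1 else 0) := by
  rcases h0 : v 0 <;> rcases h1 : v 1 <;> rcases h2 : v 2 <;>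
    simp [Supports, agree3, h0, h1, h2]

lemma lemC (v : Fin 3 → Bool) :
    (if agreeCount v (fun _ => true) = 3 then (1:ℕ) else 0)
      ≤ (if Supports v (fun _ => true) then 1 else 0) := by
  rcases h0 : v 0 <;> rcases h1 : v 1 <;> rcases h2 : v 2 <;>
    simp [Supports, agree3, h0, h1, h2]

lemma match_sum {n t : ℕ} (V : Fin n → Fin t → Bool) (p : Fin t → Bool) :
    matchCount V p = ∑ i, agreeCount (V i) p := by
  rw [matchCount, Finset.card_filter, Fintype.sum_prod_type]
  exact Finset.sum_congr rfl fun i _ => (Finset.card_filter _ _).symm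

lemma match_col {n t : ℕ} (V : Fin n → Fin t → Bool) :
    matchCount V (fun _ => true) = ∑ j, (univ.filter (fun i => V i j = true)).card := by
  rw [matchCount, Finset.card_filter, Fintype.sum_prod_type_right]
  exact Finset.sum_congr rfl fun j _ => (Finset.card_filter _ _).symm

/-- for three topics there is always a majority-supported proposal with at
least 5/6 of the matches of the all-Y proposal, i.e. r_V ≥ 5/6. -/
theorem r3_lower_bound (n : ℕ) (hn : 1 ≤ n)
    (V : Fin n → Fin 3 → Bool) (hmaj : ∀ j, ColMajority V j) :
    ∃ p : Fin 3 → Bool, MajSupported V p ∧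
      5 * matchCount V (fun _ => true) ≤ 6 * matchCount V p := by
  classical
  have hYmaj : ∀ j : Fin 3, n ≤ 2 * (univ.filter (fun i => V i j = true)).card := hmaj
  have hTcol : matchCount V (fun _ => true)
      = (univ.filter (fun i => V i (0:Fin 3) = true)).card
        + (univ.filter (fun i => V i (1:Fin 3) = true)).card
        + (univ.filter (fun i => V i (2:Fin 3) = true)).card := by
    rw [match_col, Fin.sum_univ_three]
  by_cases hK : n ≤ 2 * (univ.filter (fun i => Supports (V i) (fun _ => true))).card
  · exact ⟨fun _ => true, hK, by omega⟩
  · obtain ⟨j0, hj0⟩ : ∃ j0 : Fin 3,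
        3 * (univ.filter (fun i => V i j0 = true)).card ≤ matchCount V (fun _ => true) := by
      rcases le_total ((univ.filter (fun i => V i (0:Fin 3) = true)).card)
          ((univ.filter (fun i => V i (1:Fin 3) = true)).card) with h01 | h01 <;>
        rcases le_total ((univ.filter (fun i => V i (0:Fin 3) = true)).card)
          ((univ.filter (fun i => V i (2:Fin 3) = true)).card) with h02 | h02 <;>
        rcases le_total ((univ.filter (fun i => V i (1:Fin 3) = true)).card)
          ((univ.filter (fun i => V i (2:Fin 3) = true)).card) with h12 | h12 <;>
        first
          | exact ⟨0, by omega⟩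
          | exact ⟨1, by omega⟩
          | exact ⟨2, by omega⟩
    have E1 : (univ.filter (fun i => Supports (V i) (fun j => decide (j ≠ j0)))).card
        + (univ.filter (fun i => agreeCount (V i) (fun _ => true) = 0)).card
        + (univ.filter (fun i => V i j0 = true)).card
        = n + (univ.filter (fun i => agreeCount (V i) (fun _ => true) = 3)).card := by
      have h : ∑ i : Fin n, ((if Supports (V i) (fun j => decide (j ≠ j0)) then (1:ℕ) else 0)
          + (if agreeCount (V i) (fun _ => true) = 0 then 1 else 0)
          + (if V i j0 = true then 1 else 0))
          = ∑ i : Fin n, (1 + (if agreeCount (V i) (fun _ => true) = 3 then 1 else 0)) :=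
        Finset.sum_congr rfl fun i _ => lemB (V i) j0
      simpa [Finset.sum_add_distrib, ← Finset.card_filter, Finset.card_univ] using h
    have E2 : matchCount V (fun _ => true)
        + (univ.filter (fun i => agreeCount (V i) (fun _ => true) = 0)).card
        = n + (univ.filter (fun i => Supports (V i) (fun _ => true))).card
        + (univ.filter (fun i => agreeCount (V i) (fun _ => true) = 3)).card := by
      have h : ∑ i : Fin n, (agreeCount (V i) (fun _ => true)
          + (if agreeCount (V i) (fun _ => true) = 0 then 1 else 0))
          = ∑ i : Fin n, (1 + (if Supports (V i) (fun _ => true) then 1 else 0)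
            + (if agreeCount (V i) (fun _ => true) = 3 then 1 else 0)) :=
        Finset.sum_congr rfl fun i _ => lemI2 (V i)
      rw [match_sum]
      simpa [Finset.sum_add_distrib, ← Finset.card_filter, Finset.card_univ] using h
    have E3 : (univ.filter (fun i => agreeCount (V i) (fun _ => true) = 3)).card
        ≤ (univ.filter (fun i => Supports (V i) (fun _ => true))).card := by
      rw [Finset.card_filter, Finset.card_filter]
      exact Finset.sum_le_sum fun i _ => lemC (V i)
    have EM : matchCount V (fun j => decide (j ≠ j0))
        + 2 * (univ.filter (fun i => V i j0 = true)).card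
        = matchCount V (fun _ => true) + n := by
      have h : ∑ i : Fin n, (agreeCount (V i) (fun j => decide (j ≠ j0))
          + 2 * (if V i j0 = true then 1 else 0))
          = ∑ i : Fin n, (agreeCount (V i) (fun _ => true) + 1) :=
        Finset.sum_congr rfl fun i _ => lemA (V i) j0
      rw [match_sum V (fun j => decide (j ≠ j0)), match_sum V (fun _ => true),
        Finset.card_filter, Finset.mul_sum, ← Finset.sum_add_distrib, h,
        Finset.sum_add_distrib, Finset.sum_const, Finset.card_univ, Fintype.card_fin,
        smul_eq_mul, mul_one]
    have hsupp : n ≤ 2 * (univ.filter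
        (fun i => Supports (V i) (fun j => decide (j ≠ j0)))).card := by
      have h0 := hYmaj 0
      have h1 := hYmaj 1
      have h2 := hYmaj 2
      omega
    exact ⟨fun j => decide (j ≠ j0), hsupp, by omega⟩
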